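/- arXiv:1010.0294 — 3 statements merged into one kernel-verified Lean document; each statement's English description precedes it below -/
import Mathlib

section
/- The rational functions x1(y1,y2) = -(y1^3 - 2y1^2 - y1^2 y2 + 3y1 + 2y1 y2 + y2^2 y1 + y2^2)/D, x2(y1,y2) = (2y1^2 + y1^2 y2 - y2^2 y1 - 2y1 y2 - 3y1 + 3 + 3y2 + y2^3 + 2y2^2)/D, x3(y1,y2) = -(y1^2 y2 - y1^2 - 2y1 y2 - y2^2 y1 + y2^3 + 2y2^2 + 3y2)/D, where D = y1^3 - 2y1^2 - y1^2 y2 + 3y1 + 2y1 y2 + y2^2 y1 - 3 - 3y2 - 2y2^2, satisfy the identity 1 + x1^3 + x2^3 + x3^3 = 0 as rational functions in y1, y2 over the rationals. -/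
/-!
Clearing the common denominator `D` turns the claim into the polynomial identity
`D^3 - N1^3 + N2^3 - N3^3 = 0` for the numerators `N1, N2, N3`, which `ring` verifies; the only
other point is that `D` is a nonzero rational function.
-/

open MvPolynomial

def fermatDenom {R : Type*} [CommRing R] (a b : R) : R :=
  a^3 - 2*a^2 - a^2*b + 3*a + 2*a*b + b^2*a - 3 - 3*b - 2*b^2

theorem map_fermatDenom {R S : Type*} [CommRing R] [CommRing S] (f : R →+* S) (a b : R) :
    f (fermatDenom a b) = fermatDenom (f a) (f b) := by
  simp only [fermatDenom, map_sub, map_add, map_mul, map_pow, map_ofNat]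

-- `D(3, 0) = 15`.
theorem fermatDenom_X_ne_zero {R : Type*} [CommRing R] [CharZero R] :
    fermatDenom (X 0 : MvPolynomial (Fin 2) R) (X 1) ≠ 0 := by
  intro h
  have h15 := congrArg (eval ![(3 : R), 0]) h
  rw [map_fermatDenom] at h15
  norm_num [fermatDenom] at h15

/-- The cubic parametrization of the Fermat cubic satisfies
`1 + x1^3 + x2^3 + x3^3 = 0` in the field of rational functions `ℚ(y1, y2)`. -/
theorem fermat_param_identity :
    let K := FractionRing (MvPolynomial (Fin 2) ℚ)
    let y1 : K := algebraMap (MvPolynomial (Fin 2) ℚ) K (MvPolynomial.X 0)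
    let y2 : K := algebraMap (MvPolynomial (Fin 2) ℚ) K (MvPolynomial.X 1)
    let D : K := y1^3 - 2*y1^2 - y1^2*y2 + 3*y1 + 2*y1*y2 + y2^2*y1 - 3 - 3*y2 - 2*y2^2
    let x1 : K := -(y1^3 - 2*y1^2 - y1^2*y2 + 3*y1 + 2*y1*y2 + y2^2*y1 + y2^2) / D
    let x2 : K := (2*y1^2 + y1^2*y2 - y2^2*y1 - 2*y1*y2 - 3*y1 + 3 + 3*y2 + y2^3 + 2*y2^2) / D
    let x3 : K := -(y1^2*y2 - y1^2 - 2*y1*y2 - y2^2*y1 + y2^3 + 2*y2^2 + 3*y2) / D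
    1 + x1^3 + x2^3 + x3^3 = 0 := by
  intro K y1 y2 D x1 x2 x3
  have hD : D ≠ 0 := by
    change fermatDenom y1 y2 ≠ 0
    rw [← map_fermatDenom]
    exact (map_ne_zero_iff _ (IsFractionRing.injective _ K)).mpr fermatDenom_X_ne_zero
  simp only [x1, x2, x3]
  field_simp
  ring
end

section
/- For every point (y1, y2) ∈ ℝ² with D(y1,y2) := y1^3 - 2y1^2 - y1^2 y2 + 3y1 + 2y1 y2 + y2^2 y1 - 3 - 3y2 - 2y2^2 ≠ 0, the point (x1(y1,y2), x2(y1,y2), x3(y1,y2)) given by the cubic parametrization lies on the real affine Fermat cubic surface {(x1,x2,x3) ∈ ℝ³ : 1 + x1^3 + x2^3 + x3^3 = 0}. -/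
/-!
Clearing the common denominator `D`, the claim becomes the polynomial identity
`D³ + (-N₁)³ + N₂³ + (-N₃)³ = 0` between the denominator and the three numerators, which holds
in every commutative ring and is checked by expansion.
-/

theorem add_div_pow_three_eq_zero {K : Type*} [Field K] {d a b c : K} (hd : d ≠ 0)
    (h : d ^ 3 + a ^ 3 + b ^ 3 + c ^ 3 = 0) :
    1 + (a / d) ^ 3 + (b / d) ^ 3 + (c / d) ^ 3 = 0 := by
  rw [div_pow, div_pow, div_pow, ← div_self (pow_ne_zero 3 hd), ← add_div, ← add_div, ← add_div,
    h, zero_div]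

theorem fermat_param_homogeneous {R : Type*} [CommRing R] (y1 y2 : R) :
    (y1^3 - 2*y1^2 - y1^2*y2 + 3*y1 + 2*y1*y2 + y2^2*y1 - 3 - 3*y2 - 2*y2^2) ^ 3
      + (-(y1^3 - 2*y1^2 - y1^2*y2 + 3*y1 + 2*y1*y2 + y2^2*y1 + y2^2)) ^ 3
      + (2*y1^2 + y1^2*y2 - y2^2*y1 - 2*y1*y2 - 3*y1 + 3 + 3*y2 + y2^3 + 2*y2^2) ^ 3
      + (-(y1^2*y2 - y1^2 - 2*y1*y2 - y2^2*y1 + y2^3 + 2*y2^2 + 3*y2)) ^ 3 = 0 := by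
  ring

/-- For every `(y1, y2) ∈ ℝ²` with nonzero denominator `D`, the cubic
parametrization yields a point on the real affine Fermat cubic surface. -/
theorem fermat_param_real (y1 y2 : ℝ)
    (hD : y1^3 - 2*y1^2 - y1^2*y2 + 3*y1 + 2*y1*y2 + y2^2*y1 - 3 - 3*y2 - 2*y2^2 ≠ 0) :
    let D : ℝ := y1^3 - 2*y1^2 - y1^2*y2 + 3*y1 + 2*y1*y2 + y2^2*y1 - 3 - 3*y2 - 2*y2^2
    let x1 : ℝ := -(y1^3 - 2*y1^2 - y1^2*y2 + 3*y1 + 2*y1*y2 + y2^2*y1 + y2^2) / D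
    let x2 : ℝ := (2*y1^2 + y1^2*y2 - y2^2*y1 - 2*y1*y2 - 3*y1 + 3 + 3*y2 + y2^3 + 2*y2^2) / D
    let x3 : ℝ := -(y1^2*y2 - y1^2 - 2*y1*y2 - y2^2*y1 + y2^3 + 2*y2^2 + 3*y2) / D
    1 + x1^3 + x2^3 + x3^3 = 0 :=
  add_div_pow_three_eq_zero hD (fermat_param_homogeneous y1 y2)
end

section
/- The numerators N1, N2, N3 and the denominator D of the cubic parametrization of the Fermat cubic have no common non-constant polynomial factor in ℚ[y1, y2]; i.e., gcd(N1, N2, N3, D) = 1. -/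
/-!
Two combinations of the four polynomials eliminate one variable each:
`N1 + D = -3 (y2² + y2 + 1)` and `3 (N2 + D) + (y2 - 1) (N1 + D) = 3 (y1³ + 1)`.
Over a domain a divisor of a nonzero polynomial only involves variables of that polynomial,
so a common divisor involves neither `y1` nor `y2`: it is a nonzero constant.
-/

open MvPolynomial

namespace MvPolynomial

variable {σ : Type*}

theorem vars_subset_of_dvd {R : Type*} [CommSemiring R] [NoZeroDivisors R]
    {p f : MvPolynomial σ R} (h : p ∣ f) (hf : f ≠ 0) : p.vars ⊆ f.vars := by
  classical
  obtain ⟨q, rfl⟩ := h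
  intro i hi
  rw [mem_vars_iff_degreeOf_ne_zero] at hi ⊢
  rw [degreeOf_mul_eq (left_ne_zero_of_mul hf) (right_ne_zero_of_mul hf)]
  omega

theorem isUnit_of_dvd_of_dvd_of_mem_supported {K : Type*} [Field K] {p f g : MvPolynomial σ K}
    {s t : Set σ} (hpf : p ∣ f) (hpg : p ∣ g) (hf0 : f ≠ 0) (hg0 : g ≠ 0)
    (hf : f ∈ supported K s) (hg : g ∈ supported K t) (hst : Disjoint s t) : IsUnit p := by
  rw [mem_supported] at hf hg
  have hvars : p.vars = ∅ := Finset.coe_eq_empty.mp <| Set.subset_empty_iff.mp <|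
    hst ((Finset.coe_subset.mpr (vars_subset_of_dvd hpf hf0)).trans hf)
      ((Finset.coe_subset.mpr (vars_subset_of_dvd hpg hg0)).trans hg)
  have hp : p ≠ 0 := by rintro rfl; exact hf0 (zero_dvd_iff.mp hpf)
  rw [vars_eq_empty_iff_eq_C.mp hvars] at hp ⊢
  exact (isUnit_iff_ne_zero.mpr (C_ne_zero.mp hp)).map C

end MvPolynomial

/-- The numerators and denominator of the cubic parametrization of the Fermat
cubic have no common non-constant factor in `ℚ[y1, y2]`. -/
theorem fermat_param_no_common_factor :
    let y1 : MvPolynomial (Fin 2) ℚ := X 0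
    let y2 : MvPolynomial (Fin 2) ℚ := X 1
    let N1 := -(y1^3 - 2*y1^2 - y1^2*y2 + 3*y1 + 2*y1*y2 + y2^2*y1 + y2^2)
    let N2 := 2*y1^2 + y1^2*y2 - y2^2*y1 - 2*y1*y2 - 3*y1 + 3 + 3*y2 + y2^3 + 2*y2^2
    let N3 := -(y1^2*y2 - y1^2 - 2*y1*y2 - y2^2*y1 + y2^3 + 2*y2^2 + 3*y2)
    let D := y1^3 - 2*y1^2 - y1^2*y2 + 3*y1 + 2*y1*y2 + y2^2*y1 - 3 - 3*y2 - 2*y2^2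
    ∀ p : MvPolynomial (Fin 2) ℚ, p ∣ N1 → p ∣ N2 → p ∣ N3 → p ∣ D → IsUnit p := by
  intro y1 y2 N1 N2 N3 D p h1 h2 _ h4
  have hf : p ∣ -(3 * (y2^2 + y2 + 1)) := by
    convert dvd_add h1 h4 using 1
    simp only [N1, D]; ring
  have hg : p ∣ 3 * (y1^3 + 1) := by
    convert (dvd_add h2 h4).mul_left 3 |>.add ((dvd_add h1 h4).mul_left (y2 - 1)) using 1
    simp only [N1, N2, D]; ring
  have hy1 : y1 ∈ supported ℚ {0} := X_mem_supported.mpr rfl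
  have hy2 : y2 ∈ supported ℚ {1} := X_mem_supported.mpr rfl
  refine isUnit_of_dvd_of_dvd_of_mem_supported (s := {1}) (t := {0}) hf hg
    (fun h => by simpa [y2, map_ofNat] using congrArg (eval 0) h)
    (fun h => by simpa [y1, map_ofNat] using congrArg (eval 0) h)
    ?_ ?_ (Set.disjoint_singleton.mpr (by decide))
  all_goals apply_rules [Subalgebra.neg_mem, Subalgebra.mul_mem, Subalgebra.add_mem,
    Subalgebra.pow_mem, Subalgebra.one_mem, Subalgebra.natCast_mem]
end
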